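/- For every integer p ≥ 3 and every β > β_0 > β*(p), sup_{x ∈ (m_*(β,p), 1]} H_{β_0,p}(x) = H_{β_0,p}(m_*(β,p)). -/

import Mathlib

/-!
For `m < x ≤ 1` with `m ≥ 0`, `H_{β₀,p}(x) = H_{β,p}(x) - (β - β₀) xᵖ ≤ H_{β,p}(m) - (β - β₀) mᵖ
= H_{β₀,p}(m)`, so `H_{β₀,p}(m)` bounds `H_{β₀,p}` on `(m, 1]`. The maximizer satisfies `m < 1`
because `I' = artanh` blows up at `1` while the derivative of `β xᵖ` stays bounded, so `H_{β,p}`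
decreases near `1`; hence `m` is a limit point of `(m, 1]` and continuity makes the bound the
supremum.
-/

open Real Set Filter

/-- `I(x) = ½[(1+x)log(1+x) + (1−x)log(1−x)]` (with `Real.log 0 = 0`). -/
noncomputable def bahI (x : ℝ) : ℝ :=
  ((1 + x) * Real.log (1 + x) + (1 - x) * Real.log (1 - x)) / 2

/-- `H_{β,p}(x) = β xᵖ − I(x)`. -/
noncomputable def bahH (β : ℝ) (p : ℕ) (x : ℝ) : ℝ := β * x ^ p - bahI x

/-- `β*(p) = sup {β ≥ 0 : sup_{x∈[−1,1]} H_{β,p}(x) = 0}`. -/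
noncomputable def betaStar (p : ℕ) : ℝ :=
  sSup {β : ℝ | 0 ≤ β ∧ sSup (bahH β p '' Set.Icc (-1 : ℝ) 1) = 0}

/-- inverse hyperbolic tangent. -/
noncomputable def arctanh (x : ℝ) : ℝ := Real.log ((1 + x) / (1 - x)) / 2

/-- `η_p(t) = p⁻¹ t^{1−p} arctanh t` for `t ≠ 0`, and `η_p(0) = 0`. -/
noncomputable def etaFn (p : ℕ) (t : ℝ) : ℝ :=
  if t = 0 then 0 else (p : ℝ)⁻¹ * t ^ (1 - (p : ℤ)) * arctanh t

theorem csSup_image_Ioc_eq_left_of_le {α β : Type*} [LinearOrder α] [TopologicalSpace α]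
    [OrderTopology α] [DenselyOrdered α] [ConditionallyCompleteLinearOrder β]
    [TopologicalSpace β] [OrderTopology β] {f : α → β} {a b : α} (hab : a < b)
    (hf : ContinuousWithinAt f (Ioc a b) a) (hle : ∀ x ∈ Ioc a b, f x ≤ f a) :
    sSup (f '' Ioc a b) = f a := by
  have ha : a ∈ closure (Ioc a b) := by
    rw [closure_Ioc hab.ne]
    exact left_mem_Icc.2 hab.le
  exact (isLUB_of_mem_closure (forall_mem_image.2 hle) (hf.mem_closure_image ha)).csSup_eq
    ((nonempty_Ioc.2 hab).image f)

theorem continuous_bahH (β : ℝ) (p : ℕ) : Continuous (bahH β p) := by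
  unfold bahH bahI
  fun_prop

theorem hasDerivAt_bahI {x : ℝ} (hx : x ∈ Ioo (-1) 1) : HasDerivAt bahI (artanh x) x := by
  have hplus : 0 < 1 + x := by linarith [hx.1]
  have hminus : 0 < 1 - x := by linarith [hx.2]
  have hd₁ := (hasDerivAt_mul_log hplus.ne').comp x ((hasDerivAt_id x).const_add 1)
  have hd₂ := (hasDerivAt_mul_log hminus.ne').comp x ((hasDerivAt_id x).const_sub 1)
  refine HasDerivAt.congr_deriv (f := bahI) ((hd₁.add hd₂).div_const 2) ?_
  rw [artanh_eq_half_log (Ioo_subset_Icc_self hx), log_div hplus.ne' hminus.ne']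
  ring

theorem hasDerivAt_bahH (β : ℝ) (p : ℕ) {x : ℝ} (hx : x ∈ Ioo (-1) 1) :
    HasDerivAt (bahH β p) (β * (p * x ^ (p - 1)) - artanh x) x :=
  ((hasDerivAt_pow p x).const_mul β).sub (hasDerivAt_bahI hx)

theorem exists_strictAntiOn_bahH (β : ℝ) (p : ℕ) :
    ∃ c ∈ Ioo (-1 : ℝ) 1, StrictAntiOn (bahH β p) (Icc c 1) := by
  obtain ⟨c, hc, hcA⟩ := artanh_surjOn (mem_univ (|β| * p))
  refine ⟨c, hc, strictAntiOn_of_deriv_neg (convex_Icc c 1)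
    (continuous_bahH β p).continuousOn fun x hx => ?_⟩
  rw [interior_Icc] at hx
  have hx' : x ∈ Ioo (-1 : ℝ) 1 := ⟨hc.1.trans hx.1, hx.2⟩
  have hpow : |β * (p * x ^ (p - 1))| ≤ |β| * p := by
    rw [abs_mul, abs_mul, abs_pow, Nat.abs_cast]
    have : |x| ^ (p - 1) ≤ 1 := pow_le_one₀ (abs_nonneg x) (abs_le.2 ⟨hx'.1.le, hx'.2.le⟩)
    gcongr
    simpa using mul_le_mul_of_nonneg_left this (Nat.cast_nonneg p)
  have hart : artanh c < artanh x := artanh_lt_artanh hc.1 hx.2 hx.1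
  rw [(hasDerivAt_bahH β p hx').deriv]
  linarith [le_abs_self (β * (p * x ^ (p - 1)))]

theorem lt_one_of_isMaxOn_bahH {β : ℝ} {p : ℕ} {m : ℝ} (hm : m ≤ 1)
    (hmax : IsMaxOn (bahH β p) (Icc (-1 : ℝ) 1) m) : m < 1 := by
  obtain ⟨c, hc, hanti⟩ := exists_strictAntiOn_bahH β p
  refine hm.lt_of_ne fun hm1 => ?_
  subst hm1
  have hlt : bahH β p 1 < bahH β p c :=
    hanti (left_mem_Icc.2 hc.2.le) (right_mem_Icc.2 hc.2.le) hc.2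
  exact (hmax (Ioo_subset_Icc_self hc)).not_gt hlt

theorem bahH_le_of_isMaxOn {β β₀ : ℝ} {p : ℕ} {m x : ℝ} (hβ : β₀ ≤ β)
    (hmax : IsMaxOn (bahH β p) (Icc (-1 : ℝ) 1) m) (hx : x ∈ Icc (-1 : ℝ) 1)
    (hmx : m ^ p ≤ x ^ p) : bahH β₀ p x ≤ bahH β₀ p m := by
  have hβx : bahH β p x ≤ bahH β p m := hmax hx
  have hgap : (β - β₀) * m ^ p ≤ (β - β₀) * x ^ p :=
    mul_le_mul_of_nonneg_left hmx (sub_nonneg.2 hβ)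
  unfold bahH at hβx ⊢
  linarith

theorem statement7_general (p : ℕ) (β β₀ : ℝ) (h1 : β₀ < β)
    (m : ℝ) (hm0 : 0 < m) (hm1 : m ∈ Set.Icc (-1 : ℝ) 1)
    (hmax : IsMaxOn (bahH β p) (Set.Icc (-1 : ℝ) 1) m) :
    sSup (bahH β₀ p '' Set.Ioc m 1) = bahH β₀ p m := by
  refine csSup_image_Ioc_eq_left_of_le (lt_one_of_isMaxOn_bahH hm1.2 hmax)
    (continuous_bahH β₀ p).continuousWithinAt fun x hx => ?_
  exact bahH_le_of_isMaxOn h1.le hmax ⟨by linarith [hm1.1, hx.1], hx.2⟩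
    (pow_le_pow_left₀ hm0.le hx.1.le p)

/-- For `p ≥ 3` and `β > β₀ > β*(p)`, with `m = m_*(β,p)` the positive global maximizer
of `H_{β,p}` on `[−1,1]`: `sup_{x ∈ (m, 1]} H_{β₀,p}(x) = H_{β₀,p}(m)`. -/
theorem statement7 (p : ℕ) (hp : 3 ≤ p) (β β₀ : ℝ) (h0 : betaStar p < β₀) (h1 : β₀ < β)
    (m : ℝ) (hm0 : 0 < m) (hm1 : m ∈ Set.Icc (-1 : ℝ) 1)
    (hmax : IsMaxOn (bahH β p) (Set.Icc (-1 : ℝ) 1) m) :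
    sSup (bahH β₀ p '' Set.Ioc m 1) = bahH β₀ p m :=
  statement7_general p β β₀ h1 m hm0 hm1 hmax
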